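/- arXiv:1407.1153 — 2 statements merged into one kernel-verified Lean document; each statement's English description precedes it below -/
import Mathlib

section
/- If S ⊆ S^n is a k-sphere (the intersection of a (k+1)-dimensional linear subspace of R^{n+1} with S^n), 0 ≤ k ≤ n−1, such that S ∩ S_u^+ is nonempty, then the image g_u(S ∩ S_u^+) is a k-dimensional affine subspace of R^n_u; conversely, g_u^{-1} maps k-dimensional affine subspaces of R^n_u to relatively open k-hemispheres in S_u^+. -/
open scoped RealInnerProductSpace Pointwise
open Real

noncomputable section

/-- `Esp n` is the ambient Euclidean space `ℝ^{n+1}` containing the unit sphere `S^n`. -/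
abbrev Esp (n : ℕ) : Type := EuclideanSpace ℝ (Fin (n + 1))

/-- The unit sphere `S^n ⊆ ℝ^{n+1}`. -/
def uSphere (n : ℕ) : Set (Esp n) := {x | ‖x‖ = 1}

/-- `rad A = {λ • x : λ ≥ 0, x ∈ A}`. -/
def radSet {n : ℕ} (A : Set (Esp n)) : Set (Esp n) :=
  {y | ∃ l : ℝ, 0 ≤ l ∧ ∃ x ∈ A, y = l • x}

/-- A set `A ⊆ S^n` is spherically convex if `rad A` is convex. -/
def SphConvex {n : ℕ} (A : Set (Esp n)) : Prop := Convex ℝ (radSet A)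

/-- The open hemisphere centered at `u`. -/
def openHemi {n : ℕ} (u : Esp n) : Set (Esp n) := {v | ‖v‖ = 1 ∧ 0 < ⟪u, v⟫}

/-- The equator `S_u = {v ∈ S^n : u ⬝ v = 0}`. -/
def equator {n : ℕ} (u : Esp n) : Set (Esp n) := {v | ‖v‖ = 1 ∧ ⟪u, v⟫ = 0}

/-- Proper convex bodies contained in the open hemisphere centered at `u`:
the class `K_u^p(S^n)`. -/
def properBodies {n : ℕ} (u : Esp n) : Set (Set (Esp n)) :=
  {K | K.Nonempty ∧ IsClosed K ∧ K ⊆ openHemi u ∧ SphConvex K}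

/-- All proper convex bodies `K^p(S^n)`. -/
def allProperBodies (n : ℕ) : Set (Set (Esp n)) :=
  {K | ∃ u : Esp n, ‖u‖ = 1 ∧ K ∈ properBodies u}

/-- The gnomonic projection `g_u(v) = v/(u⬝v) − u`. -/
def gno {n : ℕ} (u v : Esp n) : Esp n := (⟪u, v⟫)⁻¹ • v - u

/-- The inverse gnomonic projection `x ↦ (x+u)/‖x+u‖`. -/
def gnoInv {n : ℕ} (u x : Esp n) : Esp n := ‖x + u‖⁻¹ • (x + u)

/-- The hyperplane `ℝ^n_u = u^⊥` of `ℝ^{n+1}`. -/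
def hyper {n : ℕ} (u : Esp n) : Set (Esp n) := {x | ⟪u, x⟫ = 0}

/-- The class `K(ℝ^n_u)` of (nonempty) compact convex subsets of the hyperplane `u^⊥`. -/
def cptCvx {n : ℕ} (u : Esp n) : Set (Set (Esp n)) :=
  {C | C.Nonempty ∧ IsCompact C ∧ Convex ℝ C ∧ C ⊆ hyper u}

/-- The spherical support function `h_u(K,v) = max {sgn(v⬝w) d(u, w|S_{u,v}) : w ∈ K}`,
where `d(u, w|S_{u,v}) = arccos ((u⬝w)/√((u⬝w)² + (v⬝w)²))`. -/
def sphSupp {n : ℕ} (u : Esp n) (K : Set (Esp n)) (v : Esp n) : ℝ :=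
  sSup ((fun w => Real.sign ⟪v, w⟫ *
    Real.arccos (⟪u, w⟫ / Real.sqrt (⟪u, w⟫ ^ 2 + ⟪v, w⟫ ^ 2))) '' K)

/-- The Euclidean support function `h(C,x) = sup {x ⬝ y : y ∈ C}`. -/
def esupp {n : ℕ} (C : Set (Esp n)) (x : Esp n) : ℝ :=
  sSup ((fun y => ⟪x, y⟫) '' C)

/-- Spherical (geodesic) distance on `S^n`. -/
def sphDist {n : ℕ} (x y : Esp n) : ℝ := Real.arccos ⟪x, y⟫

/-- The Hausdorff distance `δ_s` induced by the spherical distance. -/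
def sphHaus {n : ℕ} (A B : Set (Esp n)) : ℝ :=
  sInf {r | 0 ≤ r ∧ (∀ a ∈ A, ∃ b ∈ B, sphDist a b ≤ r) ∧
    (∀ b ∈ B, ∃ a ∈ A, sphDist a b ≤ r)}

/-- The metric `γ_u(K,L) = max_{v ∈ S_u} |h_u(K,v) − h_u(L,v)|`. -/
def gammaU {n : ℕ} (u : Esp n) (K L : Set (Esp n)) : ℝ :=
  sSup ((fun v => |sphSupp u K v - sphSupp u L v|) '' equator u)

/-- Spherical projection of `K` onto the great subsphere `V ∩ S^n`:
`K|S = (rad K | V) ∩ S^n`. -/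
def sphProj {n : ℕ} (V : Submodule ℝ (Esp n)) (K : Set (Esp n)) : Set (Esp n) :=
  ((fun x => (V.orthogonalProjection x : Esp n)) '' radSet K) ∩ uSphere n

/-- Orthogonal projection of a subset of `ℝ^{n+1}` onto a linear subspace `W`. -/
def eProj {n : ℕ} (W : Submodule ℝ (Esp n)) (C : Set (Esp n)) : Set (Esp n) :=
  (fun x => (W.orthogonalProjection x : Esp n)) '' C

/-- The spherical convex hull: the intersection of all spherically convex subsets of `S^n`
containing `A`. -/
def sphHull {n : ℕ} (A : Set (Esp n)) : Set (Esp n) :=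
  ⋂₀ {B | A ⊆ B ∧ B ⊆ uSphere n ∧ SphConvex B}

/-- The set `C` of pairs of proper convex bodies contained in a common open hemisphere. -/
def pairsC (n : ℕ) : Set (Set (Esp n) × Set (Esp n)) :=
  {p | ∃ u : Esp n, ‖u‖ = 1 ∧ p.1 ∈ properBodies u ∧ p.2 ∈ properBodies u}

/-- `u`-projection covariance of a binary operation on `K_u^p(S^n)`:
`(K|S) * (L|S) = (K*L)|S` for all great subspheres `S = V ∩ S^n` through `u`
with `0 ≤ k = dim S ≤ n − 1`. -/
def uProjCovariant {n : ℕ} (u : Esp n)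
    (op : Set (Esp n) → Set (Esp n) → Set (Esp n)) : Prop :=
  ∀ V : Submodule ℝ (Esp n), u ∈ V → Module.finrank ℝ V ≤ n →
    ∀ K ∈ properBodies u, ∀ L ∈ properBodies u,
      op (sphProj V K) (sphProj V L) = sphProj V (op K L)

/-- Projection covariance: `u`-projection covariance for every `u ∈ S^n`. -/
def projCovariantC {n : ℕ} (op : Set (Esp n) → Set (Esp n) → Set (Esp n)) : Prop :=
  ∀ u : Esp n, ‖u‖ = 1 → uProjCovariant u op

/-- Projection covariance for operations on compact convex subsets of `u^⊥`. -/
def eProjCovariant {n : ℕ} (u : Esp n)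
    (op : Set (Esp n) → Set (Esp n) → Set (Esp n)) : Prop :=
  ∀ W : Submodule ℝ (Esp n), (W : Set (Esp n)) ⊆ hyper u →
    ∀ K ∈ cptCvx u, ∀ L ∈ cptCvx u,
      op (eProj W K) (eProj W L) = eProj W (op K L)

/-! The gnomonic projection is central projection from the origin onto the tangent hyperplane
`u + u^⊥`, translated back to `u^⊥`: `v ∈ S_u^+` goes to the `x ∈ u^⊥` with `x + u` on the ray
through `v`, and `gnoInv u` undoes it. Hence `g_u` maps `V ∩ S_u^+` onto
`{x ∈ u^⊥ | x + u ∈ V}`, the affine subspace through any of its points with direction `V ∩ u^⊥`,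
of dimension `dim V - 1` because `V ⊄ u^⊥`. Conversely, an affine subspace `A ∋ a` of `u^⊥`
arises in this way from `V = dir A ⊕ ℝ (a + u)`. -/

section LinearAlgebra

variable {E : Type*} [NormedAddCommGroup E] [InnerProductSpace ℝ E]

theorem inf_orthogonal_span_singleton_sup_span_singleton {V : Submodule ℝ E} {u v : E}
    (hv : v ∈ V) (huv : ⟪u, v⟫ ≠ 0) : V ⊓ (ℝ ∙ u)ᗮ ⊔ ℝ ∙ v = V := by
  refine le_antisymm (sup_le inf_le_left ((Submodule.span_singleton_le_iff_mem _ _).2 hv))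
    fun w hw => ?_
  set c := ⟪u, w⟫ / ⟪u, v⟫
  have hw' : w - c • v ∈ V ⊓ (ℝ ∙ u)ᗮ := by
    refine ⟨V.sub_mem hw (V.smul_mem c hv), ?_⟩
    rw [SetLike.mem_coe, Submodule.mem_orthogonal_singleton_iff_inner_right, inner_sub_right,
      inner_smul_right, div_mul_cancel₀ _ huv, sub_self]
  simpa using
    Submodule.add_mem_sup hw' (Submodule.smul_mem _ c (Submodule.mem_span_singleton_self v))

theorem finrank_inf_orthogonal_span_singleton_add_one [FiniteDimensional ℝ E]
    {V : Submodule ℝ E} {u v : E} (hv : v ∈ V) (huv : ⟪u, v⟫ ≠ 0) :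
    Module.finrank ℝ (V ⊓ (ℝ ∙ u)ᗮ : Submodule ℝ E) + 1 = Module.finrank ℝ V := by
  have hv' : v ∉ V ⊓ (ℝ ∙ u)ᗮ := fun h =>
    huv (Submodule.mem_orthogonal_singleton_iff_inner_right.1 (Submodule.mem_inf.1 h).2)
  rw [← Submodule.finrank_sup_span_singleton hv',
    inf_orthogonal_span_singleton_sup_span_singleton hv huv]

theorem sup_span_singleton_inf_orthogonal_span_singleton {D : Submodule ℝ E} {u w : E}
    (hD : D ≤ (ℝ ∙ u)ᗮ) (huw : ⟪u, w⟫ ≠ 0) : (D ⊔ ℝ ∙ w) ⊓ (ℝ ∙ u)ᗮ = D := by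
  rw [sup_inf_assoc_of_le _ hD, sup_eq_left]
  rintro x ⟨hxw, hxu⟩
  obtain ⟨c, rfl⟩ := Submodule.mem_span_singleton.1 hxw
  rw [SetLike.mem_coe, Submodule.mem_orthogonal_singleton_iff_inner_right, inner_smul_right,
    mul_eq_zero] at hxu
  simp [hxu.resolve_right huw]

end LinearAlgebra

theorem setOf_mem_and_add_mem_eq_mk' {R M : Type*} [Ring R] [AddCommGroup M] [Module R M]
    {V W : Submodule R M} {p u : M} (hpW : p ∈ W) (hpV : p + u ∈ V) :
    {x | x ∈ W ∧ x + u ∈ V} = (AffineSubspace.mk' p (V ⊓ W) : Set M) := by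
  ext x
  have hxp : x - p = (x + u) - (p + u) := by abel
  rw [Set.mem_ofPred, SetLike.mem_coe, AffineSubspace.mem_mk', vsub_eq_sub, Submodule.mem_inf,
    W.sub_mem_iff_left hpW, hxp, V.sub_mem_iff_left hpV, and_comm]

section Gnomonic

variable {n : ℕ} {u : Esp n}

theorem mem_hyper_iff {x : Esp n} : x ∈ hyper u ↔ x ∈ (ℝ ∙ u)ᗮ :=
  Submodule.mem_orthogonal_singleton_iff_inner_right.symm

theorem inner_add_self_of_mem_hyper (hu : ‖u‖ = 1) {x : Esp n} (hx : x ∈ hyper u) :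
    ⟪u, x + u⟫ = 1 := by
  rw [inner_add_right, real_inner_self_eq_norm_sq, hu, hx.out]
  norm_num

theorem gno_add_self (u v : Esp n) : gno u v + u = ⟪u, v⟫⁻¹ • v :=
  sub_add_cancel _ _

theorem gno_mem_hyper (hu : ‖u‖ = 1) {v : Esp n} (hv : ⟪u, v⟫ ≠ 0) : gno u v ∈ hyper u := by
  show ⟪u, ⟪u, v⟫⁻¹ • v - u⟫ = 0
  rw [inner_sub_right, inner_smul_right, inv_mul_cancel₀ hv, real_inner_self_eq_norm_sq, hu]
  norm_num

theorem gnoInv_gno {v : Esp n} (hv : v ∈ openHemi u) : gnoInv u (gno u v) = v := by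
  obtain ⟨hv1, hpos⟩ := hv
  rw [gnoInv, gno_add_self, norm_smul, norm_inv, Real.norm_of_nonneg hpos.le, hv1, mul_one,
    inv_inv, smul_smul, mul_inv_cancel₀ hpos.ne', one_smul]

theorem inner_gnoInv (hu : ‖u‖ = 1) {x : Esp n} (hx : x ∈ hyper u) :
    ⟪u, gnoInv u x⟫ = ‖x + u‖⁻¹ := by
  rw [gnoInv, inner_smul_right, inner_add_self_of_mem_hyper hu hx, mul_one]

theorem norm_add_self_pos_of_mem_hyper (hu : ‖u‖ = 1) {x : Esp n} (hx : x ∈ hyper u) :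
    0 < ‖x + u‖ :=
  norm_pos_iff.2 fun h => by simpa [h] using inner_add_self_of_mem_hyper hu hx

theorem gnoInv_mem_openHemi (hu : ‖u‖ = 1) {x : Esp n} (hx : x ∈ hyper u) :
    gnoInv u x ∈ openHemi u := by
  have hpos := norm_add_self_pos_of_mem_hyper hu hx
  refine ⟨?_, by rw [inner_gnoInv hu hx]; positivity⟩
  rw [gnoInv, norm_smul, norm_inv, norm_norm, inv_mul_cancel₀ hpos.ne']

theorem gno_gnoInv (hu : ‖u‖ = 1) {x : Esp n} (hx : x ∈ hyper u) : gno u (gnoInv u x) = x := by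
  rw [gno, inner_gnoInv hu hx, inv_inv, gnoInv, smul_smul,
    mul_inv_cancel₀ (norm_add_self_pos_of_mem_hyper hu hx).ne', one_smul, add_sub_cancel_right]

theorem image_gno_inter_openHemi (hu : ‖u‖ = 1) (V : Submodule ℝ (Esp n)) :
    gno u '' ((V : Set (Esp n)) ∩ uSphere n ∩ openHemi u) = {x | x ∈ (ℝ ∙ u)ᗮ ∧ x + u ∈ V} := by
  ext x
  constructor
  · rintro ⟨v, ⟨⟨hvV, -⟩, hv⟩, rfl⟩
    exact ⟨mem_hyper_iff.1 (gno_mem_hyper hu hv.2.ne'), gno_add_self u v ▸ V.smul_mem _ hvV⟩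
  · rintro ⟨hx, hxV⟩
    have hxu := mem_hyper_iff.2 hx
    have hxH := gnoInv_mem_openHemi hu hxu
    exact ⟨gnoInv u x, ⟨⟨V.smul_mem _ hxV, hxH.1⟩, hxH⟩, gno_gnoInv hu hxu⟩

theorem image_gnoInv_eq_inter_openHemi (hu : ‖u‖ = 1) (V : Submodule ℝ (Esp n)) :
    gnoInv u '' {x | x ∈ (ℝ ∙ u)ᗮ ∧ x + u ∈ V} = (V : Set (Esp n)) ∩ uSphere n ∩ openHemi u := by
  rw [← image_gno_inter_openHemi hu, Set.image_image,
    Set.image_congr fun v hv => gnoInv_gno hv.2, Set.image_id']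

end Gnomonic

theorem stmt2_general {n : ℕ} (u : Esp n) (hu : ‖u‖ = 1) (k : ℕ) :
    (∀ V : Submodule ℝ (Esp n), Module.finrank ℝ V = k + 1 →
      ((V : Set (Esp n)) ∩ uSphere n ∩ openHemi u).Nonempty →
      ∃ A : AffineSubspace ℝ (Esp n), (A : Set (Esp n)).Nonempty ∧
        (A : Set (Esp n)) ⊆ hyper u ∧ Module.finrank ℝ A.direction = k ∧
        gno u '' ((V : Set (Esp n)) ∩ uSphere n ∩ openHemi u) = (A : Set (Esp n))) ∧
    (∀ A : AffineSubspace ℝ (Esp n), (A : Set (Esp n)).Nonempty →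
      (A : Set (Esp n)) ⊆ hyper u → Module.finrank ℝ A.direction = k →
      ∃ V : Submodule ℝ (Esp n), Module.finrank ℝ V = k + 1 ∧
        gnoInv u '' (A : Set (Esp n)) = (V : Set (Esp n)) ∩ uSphere n ∩ openHemi u) := by
  constructor
  · rintro V hV ⟨v₀, hv₀⟩
    obtain ⟨hpu, hpV⟩ := (image_gno_inter_openHemi hu V).subset (Set.mem_image_of_mem _ hv₀)
    have hA := setOf_mem_and_add_mem_eq_mk' hpu hpV
    refine ⟨_, AffineSubspace.mk'_nonempty _ _, ?_, ?_, by rw [image_gno_inter_openHemi hu, hA]⟩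
    · exact hA ▸ fun x hx => mem_hyper_iff.2 hx.1
    · have := finrank_inf_orthogonal_span_singleton_add_one hv₀.1.1 hv₀.2.2.ne'
      rw [AffineSubspace.direction_mk']
      omega
  · rintro A ⟨a, ha⟩ hAu hA
    have hau := inner_add_self_of_mem_hyper hu (hAu ha)
    have hD : A.direction ≤ (ℝ ∙ u)ᗮ := by
      simpa using AffineSubspace.direction_le (s₂ := (ℝ ∙ u)ᗮ.toAffineSubspace)
        fun x hx => mem_hyper_iff.1 (hAu hx)
    have hau_notMem : a + u ∉ A.direction := fun h => by
      simpa [hau] using Submodule.mem_orthogonal_singleton_iff_inner_right.1 (hD h)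
    refine ⟨A.direction ⊔ ℝ ∙ (a + u), by rw [Submodule.finrank_sup_span_singleton hau_notMem, hA],
      ?_⟩
    have hV : a + u ∈ A.direction ⊔ ℝ ∙ (a + u) :=
      Submodule.mem_sup_right (Submodule.mem_span_singleton_self _)
    rw [← image_gnoInv_eq_inter_openHemi hu,
      setOf_mem_and_add_mem_eq_mk' (mem_hyper_iff.1 (hAu ha)) hV,
      sup_span_singleton_inf_orthogonal_span_singleton hD (by rw [hau]; exact one_ne_zero),
      AffineSubspace.mk'_eq ha]

/-- If `S = V ∩ S^n` is a `k`-sphere (`dim V = k+1`, `0 ≤ k ≤ n−1`) meeting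
the open hemisphere `S_u^+`, then `g_u(S ∩ S_u^+)` is a `k`-dimensional affine subspace of
`u^⊥`; conversely, `g_u^{-1}` maps every `k`-dimensional affine subspace of `u^⊥` onto a
(relatively open) `k`-hemisphere `S ∩ S_u^+` for some `k`-sphere `S`. -/
theorem stmt2 {n : ℕ} (hn : 2 ≤ n) (u : Esp n) (hu : ‖u‖ = 1) (k : ℕ) (hk : k ≤ n - 1) :
    (∀ V : Submodule ℝ (Esp n), Module.finrank ℝ V = k + 1 →
      ((V : Set (Esp n)) ∩ uSphere n ∩ openHemi u).Nonempty →
      ∃ A : AffineSubspace ℝ (Esp n), (A : Set (Esp n)).Nonempty ∧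
        (A : Set (Esp n)) ⊆ hyper u ∧ Module.finrank ℝ A.direction = k ∧
        gno u '' ((V : Set (Esp n)) ∩ uSphere n ∩ openHemi u) = (A : Set (Esp n))) ∧
    (∀ A : AffineSubspace ℝ (Esp n), (A : Set (Esp n)).Nonempty →
      (A : Set (Esp n)) ⊆ hyper u → Module.finrank ℝ A.direction = k →
      ∃ V : Submodule ℝ (Esp n), Module.finrank ℝ V = k + 1 ∧
        gnoInv u '' (A : Set (Esp n)) = (V : Set (Esp n)) ∩ uSphere n ∩ openHemi u) :=
  stmt2_general u hu k
end
end

section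
/- If an operation * : C → K^p(S^n) is projection covariant (where C is the set of pairs (K,L) of proper spherical convex bodies contained together in some open hemisphere), then either K*L ⊆ conv(K ∪ L) for all (K,L) ∈ C, or K*L ⊆ −conv(K ∪ L) for all (K,L) ∈ C. -/
open scoped RealInnerProductSpace Pointwise
open Real

noncomputable section

/-!
Projecting onto the great 0-sphere `{±u}` collapses every body of `K_u^p` to `{u}`, so projection
covariance gives `(K * L)|{±u} = {u} * {u}`, and `{u} * {u}` is either `{u}` or `{-u}`. Since `{u}`
is also a body of `K_v^p` whenever `⟪v, u⟫ > 0`, the sign is the same at `u` and `v`, hence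
everywhere on the sphere. If it is `+`, every point `x` of `K * L` satisfies `⟪w, x⟫ ≥ 0` for each
unit `w` whose open hemisphere contains `K ∪ L` (otherwise `-w` would lie in the projection `{w}`).
The cone over `conv (K ∪ L)` is closed, so by Farkas' lemma `x` lies in it, i.e. in the spherical
hull of `K ∪ L`. The sign `-` is the same argument applied to `-x`.
-/

lemma IsCompact.convexHull_of_finiteDimensional {E : Type*} [NormedAddCommGroup E]
    [NormedSpace ℝ E] [FiniteDimensional ℝ E] {s : Set E} (hs : IsCompact s) :
    IsCompact (convexHull ℝ s) := by
  let comb (k : ℕ) (q : (Fin k → ℝ) × (Fin k → E)) : E := ∑ i, q.1 i • q.2 i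
  let simplices (k : ℕ) := stdSimplex ℝ (Fin k) ×ˢ Set.univ.pi fun _ : Fin k => s
  -- Carathéodory: at most `finrank + 1` points are needed.
  have hcara : convexHull ℝ s =
      ⋃ k ∈ Finset.range (Module.finrank ℝ E + 2), comb k '' simplices k := by
    refine subset_antisymm (fun x hx => ?_) ?_
    · obtain ⟨ι, _, z, w, hzs, hind, hw0, hw1, rfl⟩ := eq_pos_convex_span_of_mem_convexHull hx
      have hcard : Fintype.card ι < Module.finrank ℝ E + 2 := by
        have := hind.card_le_finrank_succ
        have := Submodule.finrank_le (vectorSpan ℝ (Set.range z))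
        omega
      let e := (Fintype.equivFin ι).symm
      refine Set.mem_biUnion (Finset.mem_range.2 hcard) ⟨(w ∘ e, z ∘ e), ⟨⟨?_, ?_⟩, ?_⟩, ?_⟩
      · exact fun i => (hw0 _).le
      · simpa only [Function.comp_apply, e.sum_comp] using hw1
      · exact fun i _ => hzs ⟨_, rfl⟩
      · exact e.sum_comp fun i => w i • z i
    · refine Set.iUnion₂_subset fun k _ => ?_
      rintro _ ⟨⟨w, z⟩, ⟨hw, hz⟩, rfl⟩
      exact (convex_convexHull ℝ s).sum_mem (fun i _ => hw.1 i) hw.2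
        fun i _ => subset_convexHull ℝ s (hz i (Set.mem_univ i))
  rw [hcara]
  refine (Finset.range _).isCompact_biUnion fun k _ => ?_
  exact ((isCompact_stdSimplex ℝ (Fin k)).prod (isCompact_univ_pi fun _ => hs)).image
    (continuous_finsetSum _ fun i _ =>
      ((continuous_apply i).comp continuous_fst).smul ((continuous_apply i).comp continuous_snd))

lemma inner_nonneg_of_forall_pos_on {E : Type*} [NormedAddCommGroup E] [InnerProductSpace ℝ E]
    {S : Set E} {u x v : E} (hu : ∀ y ∈ S, 0 < ⟪u, y⟫)
    (hx : ∀ w : E, ‖w‖ = 1 → (∀ y ∈ S, 0 < ⟪w, y⟫) → 0 ≤ ⟪w, x⟫)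
    (hv : ∀ y ∈ S, 0 ≤ ⟪v, y⟫) : 0 ≤ ⟪v, x⟫ := by
  by_contra! hvx
  -- Tilting `v` slightly towards `u` makes it strictly positive on `S` but keeps `⟪·, x⟫ < 0`.
  obtain ⟨δ, hδ, hδx⟩ := exists_pos_mul_lt (neg_pos.2 hvx) ⟪u, x⟫
  set w := v + δ • u
  have hwS : ∀ y ∈ S, 0 < ⟪w, y⟫ := fun y hy => by
    rw [inner_add_left, real_inner_smul_left]
    nlinarith [hv y hy, hu y hy]
  have hwx : ⟪w, x⟫ < 0 := by
    rw [inner_add_left, real_inner_smul_left]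
    linarith
  have hw : w ≠ 0 := fun h => by simp [h] at hwx
  have hnorm : 0 < ‖w‖⁻¹ := inv_pos.2 (norm_pos_iff.2 hw)
  have := hx (‖w‖⁻¹ • w) (norm_smul_inv_norm hw) fun y hy => by
    rw [real_inner_smul_left]
    exact mul_pos hnorm (hwS y hy)
  rw [real_inner_smul_left] at this
  exact (mul_neg_of_pos_of_neg hnorm hwx).not_ge this

lemma inner_add_left_pos_of_norm_eq {E : Type*} [NormedAddCommGroup E]
    [InnerProductSpace ℝ E] {a b : E} (h : ‖a‖ = ‖b‖) (hab : a + b ≠ 0) : 0 < ⟪a + b, a⟫ := by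
  have : 2 * ⟪a + b, a⟫ = ‖a + b‖ ^ 2 := by
    rw [← real_inner_self_eq_norm_sq, inner_add_right, inner_add_left, inner_add_left,
      real_inner_self_eq_norm_sq, real_inner_self_eq_norm_sq, h, real_inner_comm a b]
    ring
  nlinarith [pow_pos (norm_pos_iff.2 hab) 2]

namespace radSet

variable {n : ℕ} {A B D : Set (Esp n)}

lemma subset_self : A ⊆ radSet A :=
  fun x hx => ⟨1, zero_le_one, x, hx, (one_smul ℝ x).symm⟩

lemma smul_mem {x : Esp n} (hx : x ∈ radSet A) {c : ℝ} (hc : 0 ≤ c) : c • x ∈ radSet A := by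
  obtain ⟨l, hl, a, ha, rfl⟩ := hx
  exact ⟨c * l, mul_nonneg hc hl, a, ha, smul_smul c l a⟩

lemma subset_of_subset_radSet (h : A ⊆ radSet B) : radSet A ⊆ radSet B := by
  rintro _ ⟨l, hl, a, ha, rfl⟩
  exact smul_mem (h ha) hl

lemma smul_add_smul_mem (hD : Convex ℝ D) {p q : Esp n} (hp : p ∈ radSet D)
    (hq : q ∈ radSet D) {a b : ℝ} (ha : 0 ≤ a) (hb : 0 ≤ b) : a • p + b • q ∈ radSet D := by
  obtain ⟨l₁, hl₁, y₁, hy₁, rfl⟩ := hp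
  obtain ⟨l₂, hl₂, y₂, hy₂, rfl⟩ := hq
  simp only [smul_smul]
  rcases (add_nonneg (mul_nonneg ha hl₁) (mul_nonneg hb hl₂)).eq_or_lt with ht | ht
  · obtain ⟨h₁, h₂⟩ :=
      (add_eq_zero_iff_of_nonneg (mul_nonneg ha hl₁) (mul_nonneg hb hl₂)).1 ht.symm
    exact ⟨0, le_rfl, y₁, hy₁, by simp [h₁, h₂]⟩
  · refine ⟨a * l₁ + b * l₂, ht.le, _,
      convex_iff_div.1 hD hy₁ hy₂ (mul_nonneg ha hl₁) (mul_nonneg hb hl₂) ht, ?_⟩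
    rw [smul_add, smul_smul, smul_smul, mul_div_cancel₀ _ ht.ne', mul_div_cancel₀ _ ht.ne']

lemma isClosed {u : Esp n} (hD : IsCompact D) {c : ℝ} (hc : 0 < c)
    (hDc : ∀ y ∈ D, c ≤ ⟪u, y⟫) : IsClosed (radSet D) := by
  refine closure_subset_iff_isClosed.1 fun z hz => ?_
  let M := ⟪u, z⟫ + 1
  let piece := (fun q : ℝ × Esp n => q.1 • q.2) '' (Set.Icc 0 (M / c) ×ˢ D)
  have hpiece : IsCompact piece :=
    (isCompact_Icc.prod hD).image (continuous_fst.smul continuous_snd)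
  -- Bounding `⟪u, ·⟫` bounds the scaling factor, since `⟪u, ·⟫ ≥ c` on `D`.
  have hslab : {p | ⟪u, p⟫ < M} ∩ radSet D ⊆ piece := by
    rintro _ ⟨hlt, l, hl, y, hy, rfl⟩
    refine ⟨(l, y), ⟨⟨hl, ?_⟩, hy⟩, rfl⟩
    change ⟪u, l • y⟫ < M at hlt
    rw [real_inner_smul_right] at hlt
    rw [le_div_iff₀ hc]
    nlinarith [hDc y hy]
  have hopen : IsOpen {p | ⟪u, p⟫ < M} :=
    isOpen_lt (continuous_const.inner continuous_id) continuous_const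
  obtain ⟨⟨l, y⟩, ⟨⟨hl, -⟩, hy⟩, rfl⟩ := hpiece.isClosed.closure_subset
    (closure_mono hslab (hopen.inter_closure ⟨by simp [M], hz⟩))
  exact ⟨l, hl, y, hy, rfl⟩

end radSet

lemma Convex.sphConvex {n : ℕ} {D : Set (Esp n)} (hD : Convex ℝ D) : SphConvex D :=
  fun _ hp _ hq _ _ ha hb _ => radSet.smul_add_smul_mem hD hp hq ha hb

section SphericalHull

variable {n : ℕ} {S : Set (Esp n)} {x : Esp n}

lemma mem_radSet_convexHull_of_forall_inner_nonneg {u : Esp n} (hSne : S.Nonempty)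
    (hScpt : IsCompact S) (hS : S ⊆ openHemi u)
    (hx : ∀ w : Esp n, ‖w‖ = 1 → (∀ y ∈ S, 0 < ⟪w, y⟫) → 0 ≤ ⟪w, x⟫) :
    x ∈ radSet (convexHull ℝ S) := by
  obtain ⟨m, hmS, hmin⟩ :=
    hScpt.exists_isMinOn hSne (continuous_const.inner (𝕜 := ℝ) continuous_id).continuousOn
  have hD : ∀ y ∈ convexHull ℝ S, ⟪u, m⟫ ≤ ⟪u, y⟫ :=
    convexHull_min (fun y hy => hmin hy) (convex_halfSpace_ge (innerₛₗ ℝ u).isLinear _)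
  let C : ProperCone ℝ (Esp n) :=
    ⟨PointedCone.ofConeComb (radSet (convexHull ℝ S))
        ⟨m, radSet.subset_self (subset_convexHull ℝ S hmS)⟩
        fun _ hp _ hq _ ha _ hb => radSet.smul_add_smul_mem (convex_convexHull ℝ S) hp hq ha hb,
      radSet.isClosed hScpt.convexHull_of_finiteDimensional (hS hmS).2 hD⟩
  by_contra hxC
  obtain ⟨v, hvC, hvx⟩ := ProperCone.hyperplane_separation' C hxC
  have := inner_nonneg_of_forall_pos_on (fun y hy => (hS hy).2) hx (v := v) fun y hy => by
    rw [real_inner_comm]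
    exact hvC y (radSet.subset_self (subset_convexHull ℝ S hy))
  rw [real_inner_comm] at this
  exact hvx.not_ge this

lemma mem_sphHull_of_mem_radSet_convexHull (hx : ‖x‖ = 1) (h : x ∈ radSet (convexHull ℝ S)) :
    x ∈ sphHull S := by
  rintro B ⟨hSB, hBsph, hBconv⟩
  have : convexHull ℝ S ⊆ radSet B :=
    convexHull_min (fun y hy => radSet.subset_self (hSB hy)) hBconv
  obtain ⟨l, hl, b, hb, rfl⟩ := radSet.subset_of_subset_radSet this h
  have hb1 : ‖b‖ = 1 := hBsph hb
  rw [norm_smul, hb1, mul_one, Real.norm_of_nonneg hl] at hx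
  rwa [hx, one_smul]

end SphericalHull

section SphericalProjection

variable {n : ℕ}

lemma exists_norm_eq_one_inner_eq_zero (hn : 1 ≤ n) (u : Esp n) :
    ∃ e : Esp n, ‖e‖ = 1 ∧ ⟪u, e⟫ = 0 := by
  have hpos : 0 < Module.finrank ℝ (ℝ ∙ u)ᗮ := by
    have := Submodule.finrank_add_finrank_orthogonal (ℝ ∙ u)
    have := finrank_span_le_card (R := ℝ) ({u} : Set (Esp n))
    simp only [Set.toFinset_singleton, Finset.card_singleton, finrank_euclideanSpace_fin] at *
    omega
  obtain ⟨z, hz⟩ := Module.finrank_pos_iff_exists_ne_zero.1 hpos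
  have hz' : (z : Esp n) ≠ 0 := by simpa using hz
  refine ⟨‖(z : Esp n)‖⁻¹ • (z : Esp n), norm_smul_inv_norm hz', ?_⟩
  rw [real_inner_smul_right, Submodule.mem_orthogonal_singleton_iff_inner_right.1 z.2, mul_zero]

lemma mem_sphProj_span_singleton {u : Esp n} (hu : ‖u‖ = 1) {A : Set (Esp n)} {y : Esp n} :
    y ∈ sphProj (ℝ ∙ u) A ↔
      (y = u ∧ ∃ a ∈ A, 0 < ⟪u, a⟫) ∨ (y = -u ∧ ∃ a ∈ A, ⟪u, a⟫ < 0) := by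
  have hproj (z : Esp n) : ((ℝ ∙ u).orthogonalProjectionOnto z : Esp n) = ⟪u, z⟫ • u :=
    Submodule.starProjection_unit_singleton ℝ hu z
  constructor
  · rintro ⟨⟨_, ⟨l, hl, a, ha, rfl⟩, rfl⟩, hy⟩
    change ‖_‖ = 1 at hy
    simp only [hproj, real_inner_smul_right] at hy ⊢
    rw [norm_smul, hu, mul_one, Real.norm_eq_abs] at hy
    rcases (abs_eq zero_le_one).1 hy with h | h
    · exact Or.inl ⟨by rw [h, one_smul], a, ha, by nlinarith⟩
    · exact Or.inr ⟨by rw [h, neg_one_smul], a, ha, by nlinarith⟩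
  · rintro (⟨hy, a, ha, hpos⟩ | ⟨hy, a, ha, hneg⟩) <;> rw [hy]
    · refine ⟨⟨⟪u, a⟫⁻¹ • a, ⟨_, inv_nonneg.2 hpos.le, a, ha, rfl⟩, ?_⟩, hu⟩
      simp only [hproj, real_inner_smul_right, inv_mul_cancel₀ hpos.ne', one_smul]
    · refine ⟨⟨(-⟪u, a⟫)⁻¹ • a, ⟨_, inv_nonneg.2 (neg_nonneg.2 hneg.le), a, ha, rfl⟩, ?_⟩,
        (norm_neg u).trans hu⟩
      simp only [hproj, real_inner_smul_right, inv_neg, neg_mul, inv_mul_cancel₀ hneg.ne,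
        neg_one_smul]

lemma sphProj_span_singleton_of_subset_openHemi {u : Esp n} (hu : ‖u‖ = 1) {K : Set (Esp n)}
    (hne : K.Nonempty) (hK : K ⊆ openHemi u) : sphProj (ℝ ∙ u) K = {u} := by
  obtain ⟨a, ha⟩ := hne
  ext y
  rw [mem_sphProj_span_singleton hu, Set.mem_singleton_iff]
  refine ⟨?_, fun hy => Or.inl ⟨hy, a, ha, (hK ha).2⟩⟩
  rintro (⟨hy, -⟩ | ⟨-, b, hb, hneg⟩)
  · exact hy
  · exact absurd (hK hb).2 hneg.not_gt

lemma singleton_mem_properBodies {u x : Esp n} (hx : ‖x‖ = 1) (hux : 0 < ⟪u, x⟫) :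
    {x} ∈ properBodies u :=
  ⟨Set.singleton_nonempty x, isClosed_singleton, Set.singleton_subset_iff.2 ⟨hx, hux⟩,
    (convex_singleton x).sphConvex⟩

lemma neg_singleton_ne_singleton {u : Esp n} (hu : ‖u‖ = 1) : ({-u} : Set (Esp n)) ≠ {u} := by
  intro h
  have := congrArg (⟪u, ·⟫) (Set.singleton_eq_singleton_iff.1 h)
  norm_num [hu] at this

end SphericalProjection

section ProjectionCovariance

variable {n : ℕ} {op : Set (Esp n) → Set (Esp n) → Set (Esp n)}

lemma sphProj_op_eq_op_singleton (hn : 1 ≤ n) (hcov : projCovariantC op) {u : Esp n}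
    (hu : ‖u‖ = 1) {K L : Set (Esp n)} (hK : K ∈ properBodies u) (hL : L ∈ properBodies u) :
    sphProj (ℝ ∙ u) (op K L) = op {u} {u} := by
  have hdim : Module.finrank ℝ (ℝ ∙ u) ≤ n := by
    rwa [finrank_span_singleton (norm_ne_zero_iff.1 (hu ▸ one_ne_zero))]
  have := hcov u hu (ℝ ∙ u) (Submodule.mem_span_singleton_self u) hdim K hK L hL
  rwa [sphProj_span_singleton_of_subset_openHemi hu hK.1 hK.2.2.1,
    sphProj_span_singleton_of_subset_openHemi hu hL.1 hL.2.2.1, eq_comm] at this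

lemma op_singleton_eq_or (hn : 1 ≤ n) (hmap : ∀ p ∈ pairsC n, op p.1 p.2 ∈ allProperBodies n)
    (hcov : projCovariantC op) {u : Esp n} (hu : ‖u‖ = 1) :
    op {u} {u} = {u} ∨ op {u} {u} = {-u} := by
  have hself : {u} ∈ properBodies u :=
    singleton_mem_properBodies hu (by rw [real_inner_self_eq_norm_sq, hu]; norm_num)
  obtain ⟨w, -, hne, -, hsub, -⟩ : op {u} {u} ∈ allProperBodies n :=
    hmap ({u}, {u}) ⟨u, hu, hself, hself⟩
  have hpair : op {u} {u} ⊆ {u, -u} := by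
    rw [← sphProj_op_eq_op_singleton hn hcov hu hself hself]
    intro y hy
    rcases (mem_sphProj_span_singleton hu).1 hy with ⟨rfl, -⟩ | ⟨rfl, -⟩ <;> simp
  rcases hne.subset_pair_iff_eq.1 hpair with h | h | h
  · exact Or.inl h
  · exact Or.inr h
  · have hmem : u ∈ op {u} {u} ∧ -u ∈ op {u} {u} := by simp [h]
    have h₁ := (hsub hmem.1).2
    have h₂ := (hsub hmem.2).2
    rw [inner_neg_right] at h₂
    linarith

lemma op_singleton_eq_self_iff_of_inner_pos (hn : 1 ≤ n)
    (hmap : ∀ p ∈ pairsC n, op p.1 p.2 ∈ allProperBodies n) (hcov : projCovariantC op)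
    {u v : Esp n} (hu : ‖u‖ = 1) (hv : ‖v‖ = 1) (huv : 0 < ⟪v, u⟫) :
    op {u} {u} = {u} ↔ op {v} {v} = {v} := by
  have hu' := singleton_mem_properBodies hu huv
  have h := sphProj_op_eq_op_singleton hn hcov hv hu' hu'
  rcases op_singleton_eq_or hn hmap hcov hu with hop | hop <;> rw [hop] at h ⊢
  · rw [sphProj_span_singleton_of_subset_openHemi hv hu'.1 hu'.2.2.1] at h
    exact iff_of_true rfl h.symm
  · have : sphProj (ℝ ∙ v) {-u} = {-v} := by
      ext y
      simp [mem_sphProj_span_singleton hv, huv, huv.not_gt]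
    rw [this] at h
    exact iff_of_false (neg_singleton_ne_singleton hu) (h ▸ neg_singleton_ne_singleton hv)

lemma op_singleton_eq_self_iff (hn : 1 ≤ n)
    (hmap : ∀ p ∈ pairsC n, op p.1 p.2 ∈ allProperBodies n) (hcov : projCovariantC op)
    {u v : Esp n} (hu : ‖u‖ = 1) (hv : ‖v‖ = 1) :
    op {u} {u} = {u} ↔ op {v} {v} = {v} := by
  -- Non-antipodal unit vectors are linked through their normalized midpoint.
  have link {a b : Esp n} (ha : ‖a‖ = 1) (hb : ‖b‖ = 1) (hab : a + b ≠ 0) :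
      op {a} {a} = {a} ↔ op {b} {b} = {b} := by
    have hinv : 0 < ‖a + b‖⁻¹ := inv_pos.2 (norm_pos_iff.2 hab)
    have hw := norm_smul_inv_norm (𝕜 := ℝ) hab
    have hwa : 0 < ⟪‖a + b‖⁻¹ • (a + b), a⟫ := by
      rw [real_inner_smul_left]
      exact mul_pos hinv (inner_add_left_pos_of_norm_eq (ha.trans hb.symm) hab)
    have hwb : 0 < ⟪‖a + b‖⁻¹ • (a + b), b⟫ := by
      have := inner_add_left_pos_of_norm_eq (hb.trans ha.symm) (add_comm a b ▸ hab)
      rw [add_comm b a] at this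
      rw [real_inner_smul_left]
      exact mul_pos hinv this
    exact (op_singleton_eq_self_iff_of_inner_pos hn hmap hcov ha hw hwa).trans
      (op_singleton_eq_self_iff_of_inner_pos hn hmap hcov hb hw hwb).symm
  by_cases huv : u + v = 0
  · obtain ⟨e, he, hue⟩ := exists_norm_eq_one_inner_eq_zero hn u
    have heu : ⟪e, u⟫ = 0 := (real_inner_comm e u).symm.trans hue
    have hev : v = -u := eq_neg_of_add_eq_zero_right huv
    refine (link hu he fun h => ?_).trans (link he hv fun h => ?_)
    · have := congrArg (⟪u, ·⟫) h
      simp [inner_add_right, hue, hu] at this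
    · have := congrArg (⟪e, ·⟫) h
      simp [inner_add_right, hev, heu, he] at this
  · exact link hu hv huv

end ProjectionCovariance

section Pairs

variable {n : ℕ}

lemma isCompact_of_mem_properBodies {u : Esp n} {K : Set (Esp n)} (hK : K ∈ properBodies u) :
    IsCompact K :=
  (isCompact_sphere 0 1).of_isClosed_subset hK.2.1 fun y hy => by
    simpa using (hK.2.2.1 hy).1

lemma mem_properBodies_of_forall_inner_pos {u w : Esp n} {K : Set (Esp n)}
    (hK : K ∈ properBodies u) (hw : ∀ y ∈ K, 0 < ⟪w, y⟫) : K ∈ properBodies w :=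
  ⟨hK.1, hK.2.1, fun y hy => ⟨(hK.2.2.1 hy).1, hw y hy⟩, hK.2.2.2⟩

lemma mem_sphHull_of_mem_pairsC {p : Set (Esp n) × Set (Esp n)} (hp : p ∈ pairsC n)
    {x : Esp n} (hx : ‖x‖ = 1)
    (hxw : ∀ w : Esp n, ‖w‖ = 1 → p.1 ∈ properBodies w → p.2 ∈ properBodies w → 0 ≤ ⟪w, x⟫) :
    x ∈ sphHull (p.1 ∪ p.2) := by
  obtain ⟨u, -, hK, hL⟩ := hp
  refine mem_sphHull_of_mem_radSet_convexHull hx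
    (mem_radSet_convexHull_of_forall_inner_nonneg hK.1.inl
      ((isCompact_of_mem_properBodies hK).union (isCompact_of_mem_properBodies hL))
      (Set.union_subset hK.2.2.1 hL.2.2.1) fun w hw hwS => hxw w hw ?_ ?_)
  · exact mem_properBodies_of_forall_inner_pos hK fun y hy => hwS y (Or.inl hy)
  · exact mem_properBodies_of_forall_inner_pos hL fun y hy => hwS y (Or.inr hy)

lemma inner_nonneg_of_sphProj_eq_singleton {w x : Esp n} {M : Set (Esp n)} (hw : ‖w‖ = 1)
    (h : sphProj (ℝ ∙ w) M = {w}) (hx : x ∈ M) : 0 ≤ ⟪w, x⟫ := by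
  by_contra! hneg
  have : -w ∈ sphProj (ℝ ∙ w) M := (mem_sphProj_span_singleton hw).2 (Or.inr ⟨rfl, x, hx, hneg⟩)
  rw [h] at this
  exact neg_singleton_ne_singleton hw (Set.singleton_eq_singleton_iff.2 this)

lemma inner_nonpos_of_sphProj_eq_neg_singleton {w x : Esp n} {M : Set (Esp n)} (hw : ‖w‖ = 1)
    (h : sphProj (ℝ ∙ w) M = {-w}) (hx : x ∈ M) : ⟪w, x⟫ ≤ 0 := by
  by_contra! hpos
  have : w ∈ sphProj (ℝ ∙ w) M := (mem_sphProj_span_singleton hw).2 (Or.inl ⟨rfl, x, hx, hpos⟩)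
  rw [h] at this
  exact neg_singleton_ne_singleton hw (Set.singleton_eq_singleton_iff.2 this.symm)

variable {op : Set (Esp n) → Set (Esp n) → Set (Esp n)}

lemma op_subset_sphHull (hn : 1 ≤ n) (hmap : ∀ p ∈ pairsC n, op p.1 p.2 ∈ allProperBodies n)
    (hcov : projCovariantC op) (hsign : ∀ w : Esp n, ‖w‖ = 1 → op {w} {w} = {w}) :
    ∀ p ∈ pairsC n, op p.1 p.2 ⊆ sphHull (p.1 ∪ p.2) := by
  intro p hp x hx
  obtain ⟨_, -, -, -, hsub, -⟩ := hmap p hp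
  refine mem_sphHull_of_mem_pairsC hp (hsub hx).1 fun w hw hK hL => ?_
  refine inner_nonneg_of_sphProj_eq_singleton hw ?_ hx
  rw [sphProj_op_eq_op_singleton hn hcov hw hK hL, hsign w hw]

lemma op_subset_neg_sphHull (hn : 1 ≤ n)
    (hmap : ∀ p ∈ pairsC n, op p.1 p.2 ∈ allProperBodies n)
    (hcov : projCovariantC op) (hsign : ∀ w : Esp n, ‖w‖ = 1 → op {w} {w} = {-w}) :
    ∀ p ∈ pairsC n, op p.1 p.2 ⊆ -sphHull (p.1 ∪ p.2) := by
  intro p hp x hx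
  obtain ⟨_, -, -, -, hsub, -⟩ := hmap p hp
  refine mem_sphHull_of_mem_pairsC hp ((norm_neg x).trans (hsub hx).1) fun w hw hK hL => ?_
  rw [inner_neg_right, neg_nonneg]
  refine inner_nonpos_of_sphProj_eq_neg_singleton hw ?_ hx
  rw [sphProj_op_eq_op_singleton hn hcov hw hK hL, hsign w hw]

end Pairs

/-- If `* : C → K^p(S^n)` is projection covariant, then either
`K*L ⊆ conv(K ∪ L)` for all `(K,L) ∈ C`, or `K*L ⊆ −conv(K ∪ L)` for all `(K,L) ∈ C`. -/
theorem stmt14 {n : ℕ} (hn : 2 ≤ n) (op : Set (Esp n) → Set (Esp n) → Set (Esp n))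
    (hmap : ∀ p ∈ pairsC n, op p.1 p.2 ∈ allProperBodies n)
    (hcov : projCovariantC op) :
    (∀ p ∈ pairsC n, op p.1 p.2 ⊆ sphHull (p.1 ∪ p.2)) ∨
    (∀ p ∈ pairsC n, op p.1 p.2 ⊆ -sphHull (p.1 ∪ p.2)) := by
  have hn₁ : 1 ≤ n := by omega
  obtain ⟨e, he⟩ := exists_norm_eq (Esp n) zero_le_one
  have hsign {w : Esp n} (hw : ‖w‖ = 1) := op_singleton_eq_self_iff hn₁ hmap hcov he hw
  rcases op_singleton_eq_or hn₁ hmap hcov he with h | h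
  · exact Or.inl (op_subset_sphHull hn₁ hmap hcov fun w hw => (hsign hw).1 h)
  · refine Or.inr (op_subset_neg_sphHull hn₁ hmap hcov fun w hw => ?_)
    refine (op_singleton_eq_or hn₁ hmap hcov hw).resolve_left fun hw' => ?_
    exact neg_singleton_ne_singleton he (h.symm.trans ((hsign hw).2 hw'))
end
end
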